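/- arXiv:2510.21157 — 2 statements merged into one kernel-verified Lean document; each statement's English description precedes it below -/
import Mathlib

section
/- For |q|<1 and z not a nonpositive integer power of q, the Jacobi triple product identity holds: (q^2; q^2)_∞ (qz; q^2)_∞ (q/z; q^2)_∞ = ∑_{n=-∞}^{∞} (-1)^n z^n q^{n^2}. -/
open Complex

/-- Infinite q-Pochhammer symbol `(a;q)_∞ = ∏_{k=0}^∞ (1 - a q^k)`. -/
noncomputable def qPochInf (a q : ℂ) : ℂ := ∏' k : ℕ, (1 - a * q ^ k)

/-!
The finite form of the identity (Cauchy, MacMahon) is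
`(qz; q²)_N (q/z; q²)_N = ∑_{|n| ≤ N} [2N, N+n]_{q²} (-1)ⁿ zⁿ q^{n²}`:
after pulling `(-z)^N q^{-N²}` out of the factors of `(q/z; q²)_N`, the left side becomes the
single product `∏_{i < 2N} (1 - z q^{2i+1-2N})`, which the q-binomial theorem expands.
Multiplied by `(q²; q²)_N`, the coefficients
`(q²; q²)_N [2N, N+n]_{q²} = (q²; q²)_N (q²; q²)_{2N} / ((q²; q²)_{N+n} (q²; q²)_{N-n})`
are bounded uniformly in `N` and `n`, because `(q²; q²)_m` converges to a nonzero limit,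
and tend to `1` for fixed `n`. Tannery's theorem then lets `N → ∞` under the sum.
-/

open Finset Filter Topology

section Algebra

variable {R : Type*} [CommRing R]

def qPoch (a t : R) (n : ℕ) : R := ∏ k ∈ range n, (1 - a * t ^ k)

-- The exponent `m - k` truncates only when `k > m`, where `gaussBinom t m k = 0` anyway.
def gaussBinom (t : R) : ℕ → ℕ → R
  | _, 0 => 1
  | 0, _ + 1 => 0
  | m + 1, k + 1 => gaussBinom t m (k + 1) + t ^ (m - k) * gaussBinom t m k

@[simp] lemma gaussBinom_zero_right (t : R) (m : ℕ) : gaussBinom t m 0 = 1 := by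
  cases m <;> rfl

lemma gaussBinom_succ_succ (t : R) (m k : ℕ) :
    gaussBinom t (m + 1) (k + 1) = gaussBinom t m (k + 1) + t ^ (m - k) * gaussBinom t m k := rfl

lemma gaussBinom_of_lt (t : R) : ∀ {m k : ℕ}, m < k → gaussBinom t m k = 0
  | 0, _ + 1, _ => rfl
  | m + 1, k + 1, h => by
    rw [gaussBinom_succ_succ, gaussBinom_of_lt t (by omega), gaussBinom_of_lt t (by omega)]
    simp

@[simp] lemma gaussBinom_self (t : R) : ∀ m : ℕ, gaussBinom t m m = 1
  | 0 => rfl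
  | m + 1 => by
    rw [gaussBinom_succ_succ, gaussBinom_of_lt t (by omega), gaussBinom_self, Nat.sub_self]
    simp

@[simp] lemma qPoch_zero (a t : R) : qPoch a t 0 = 1 := rfl

lemma qPoch_succ (a t : R) (n : ℕ) : qPoch a t (n + 1) = qPoch a t n * (1 - a * t ^ n) :=
  prod_range_succ _ _

lemma qPoch_add (a t : R) (m n : ℕ) :
    qPoch a t (m + n) = qPoch a t m * qPoch (a * t ^ m) t n := by
  simp only [qPoch, prod_range_add, pow_add, mul_assoc]

theorem gaussBinom_mul_qPoch_mul_qPoch (t : R) :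
    ∀ k j : ℕ, gaussBinom t (k + j) k * qPoch t t k * qPoch t t j = qPoch t t (k + j)
  | 0, j => by simp
  | k + 1, 0 => by simp
  | k + 1, j + 1 => by
    have h₁ := gaussBinom_mul_qPoch_mul_qPoch t (k + 1) j
    have h₂ := gaussBinom_mul_qPoch_mul_qPoch t k (j + 1)
    rw [qPoch_succ t t k] at h₁
    rw [show k + (j + 1) = k + 1 + j by ring, qPoch_succ t t j] at h₂
    rw [show k + 1 + (j + 1) = k + 1 + j + 1 by ring, gaussBinom_succ_succ,
      show k + 1 + j - k = j + 1 by omega, qPoch_succ, qPoch_succ t t j, qPoch_succ t t (k + 1 + j)]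
    linear_combination (1 - t * t ^ j) * h₁ + t ^ (j + 1) * (1 - t * t ^ k) * h₂

theorem qPoch_eq_sum_gaussBinom (a t : R) (m : ℕ) :
    qPoch a t m = ∑ k ∈ range (m + 1), gaussBinom t m k * (-a) ^ k * t ^ k.choose 2 := by
  induction m with
  | zero => simp
  | succ m ih =>
    set S := ∑ k ∈ range (m + 1), gaussBinom t m k * (-a) ^ k * t ^ k.choose 2
    have h_shift : ∑ k ∈ range (m + 1),
        gaussBinom t m (k + 1) * (-a) ^ (k + 1) * t ^ (k + 1).choose 2 + 1 = S := by
      have := sum_range_succ' (fun k => gaussBinom t m k * (-a) ^ k * t ^ k.choose 2) (m + 1)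
      rw [sum_range_succ, gaussBinom_of_lt t (by omega : m < m + 1)] at this
      simpa using this.symm
    have h_tail : ∑ k ∈ range (m + 1),
        t ^ (m - k) * gaussBinom t m k * (-a) ^ (k + 1) * t ^ (k + 1).choose 2
          = -a * t ^ m * S := by
      rw [mul_sum]
      refine sum_congr rfl fun k hk => ?_
      have hkm : t ^ (m - k) * t ^ k = t ^ m :=
        pow_sub_mul_pow t (Nat.lt_succ_iff.1 (mem_range.1 hk))
      rw [Nat.choose_succ_succ', Nat.choose_one_right, pow_add, pow_succ]
      linear_combination gaussBinom t m k * (-a) ^ k * (-a) * t ^ k.choose 2 * hkm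
    rw [sum_range_succ', qPoch_succ, ih]
    simp only [gaussBinom_succ_succ, add_mul, sum_add_distrib]
    rw [h_tail, add_right_comm, ← h_shift]
    simp only [gaussBinom_zero_right, pow_zero, mul_one, Nat.choose_zero_succ, neg_mul]
    ring

end Algebra

section FiniteJacobi

variable {K : Type*} [Field K] {q z : K}

def thetaTerm (q z : K) (n : ℤ) : K := (-1) ^ n * z ^ n * q ^ (n ^ 2)

lemma qPoch_reflect (hq : q ≠ 0) (hz : z ≠ 0) (N : ℕ) :
    qPoch (z * q / q ^ (2 * N)) (q ^ 2) N = (-z) ^ N / q ^ (N ^ 2) * qPoch (q / z) (q ^ 2) N := by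
  have h_odd : ∑ j ∈ range N, (2 * j + 1) = N ^ 2 := by
    induction N with
    | zero => rfl
    | succ N ih => rw [sum_range_succ, ih]; ring
  have h_factor : ∀ j ∈ range N, 1 - z * q / q ^ (2 * N) * (q ^ 2) ^ (N - 1 - j)
      = -z / q ^ (2 * j + 1) * (1 - q / z * (q ^ 2) ^ j) := by
    intro j hj
    have hsplit : q ^ (2 * N) = (q ^ 2) ^ (N - 1 - j) * q ^ (2 * j + 1) * q := by
      rw [← pow_mul, ← pow_add, ← pow_succ]
      have := mem_range.1 hj
      congr 1
      omega
    rw [hsplit, ← pow_mul]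
    field_simp
    ring
  rw [qPoch, ← prod_range_reflect, prod_congr rfl h_factor, prod_mul_distrib, prod_div_distrib,
    prod_const, card_range, prod_pow_eq_pow_sum, h_odd, qPoch]

lemma qPoch_centered_two_mul (hq : q ≠ 0) (hz : z ≠ 0) (N : ℕ) :
    qPoch (z * q / q ^ (2 * N)) (q ^ 2) (2 * N)
      = (-z) ^ N / q ^ (N ^ 2) * (qPoch (q * z) (q ^ 2) N * qPoch (q / z) (q ^ 2) N) := by
  have h_shift : z * q / q ^ (2 * N) * (q ^ 2) ^ N = q * z := by
    rw [← pow_mul]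
    field_simp
  rw [two_mul, qPoch_add, ← two_mul, h_shift, qPoch_reflect hq hz]
  ring

lemma thetaTerm_natCast_sub (hq : q ≠ 0) (hz : z ≠ 0) (N k : ℕ) :
    thetaTerm q z (k - N)
      = q ^ (N ^ 2) / (-z) ^ N * ((-(z * q / q ^ (2 * N))) ^ k * (q ^ 2) ^ k.choose 2) := by
  have h_choose : (2 * k.choose 2 : ℤ) = k ^ 2 - k := by
    have := Nat.cast_choose_two ℚ k
    qify
    rw [this]
    ring
  have h_exp : ((k : ℤ) - N) ^ 2
      = ((k + 2 * k.choose 2 + N ^ 2 : ℕ) : ℤ) - ((2 * N * k : ℕ) : ℤ) := by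
    push_cast
    linear_combination -h_choose
  rw [thetaTerm, zpow_sub₀ (neg_ne_zero.2 one_ne_zero), zpow_sub₀ hz, h_exp, zpow_sub₀ hq]
  simp only [zpow_natCast, neg_pow z, neg_pow (z * q / q ^ (2 * N)), div_pow, ← pow_mul]
  field_simp
  ring

theorem qPoch_mul_qPoch_eq_sum_gaussBinom (hq : q ≠ 0) (hz : z ≠ 0) (N : ℕ) :
    qPoch (q * z) (q ^ 2) N * qPoch (q / z) (q ^ 2) N
      = ∑ n ∈ Icc (-N : ℤ) N,
          gaussBinom (q ^ 2) (2 * N) (N + n).toNat * thetaTerm q z n := by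
  calc qPoch (q * z) (q ^ 2) N * qPoch (q / z) (q ^ 2) N
      = q ^ (N ^ 2) / (-z) ^ N * qPoch (z * q / q ^ (2 * N)) (q ^ 2) (2 * N) := by
        have : (-z) ^ N ≠ 0 := pow_ne_zero N (neg_ne_zero.2 hz)
        rw [qPoch_centered_two_mul hq hz]
        field_simp
    _ = _ := by
        rw [qPoch_eq_sum_gaussBinom, mul_sum]
        refine sum_nbij' (fun k => (k : ℤ) - N) (fun n => (N + n).toNat) ?_ ?_ ?_ ?_ ?_
        iterate 4
          · intro x hx
            simp only [mem_range, mem_Icc] at hx ⊢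
            omega
        · intro k _
          rw [show ((N : ℤ) + (k - N)).toNat = k by omega,
            thetaTerm_natCast_sub hq hz]
          ring

end FiniteJacobi

section Analysis

lemma summable_norm_pow_self {E : Type*} [NormedDivisionRing E] {u : ℕ → E}
    (hu : Tendsto u atTop (𝓝 0)) : Summable fun k => ‖u k ^ k‖ := by
  refine Summable.of_norm_bounded_eventually_nat summable_geometric_two ?_
  filter_upwards [(tendsto_zero_iff_norm_tendsto_zero.1 hu).eventually_le_const one_half_pos]
    with k hk
  rw [norm_norm, norm_pow]
  exact pow_le_pow_left₀ (norm_nonneg _) hk k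

lemma summable_norm_thetaTerm {q : ℂ} (hq : ‖q‖ < 1) (z : ℂ) :
    Summable fun n => ‖thetaTerm q z n‖ := by
  have h (w : ℂ) : Summable fun k : ℕ => ‖(w * q ^ k) ^ k‖ :=
    summable_norm_pow_self <| by
      simpa using (tendsto_pow_atTop_nhds_zero_of_norm_lt_one hq).const_mul w
  -- `thetaTerm q z (k : ℕ) = (-z * q ^ k) ^ k` and `thetaTerm q z (-k) = (-z⁻¹ * q ^ k) ^ k`.
  refine Summable.of_nat_of_neg ((h (-z)).congr fun k => ?_) ((h (-z⁻¹)).congr fun k => ?_)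
  · rw [thetaTerm, show ((k : ℤ) ^ 2) = ((k ^ 2 : ℕ) : ℤ) by push_cast; rfl]
    simp only [zpow_natCast]
    congr 1
    ring
  · rw [thetaTerm, show ((-(k : ℤ)) ^ 2) = ((k ^ 2 : ℕ) : ℤ) by push_cast; ring]
    simp only [zpow_neg, zpow_natCast, ← inv_pow, inv_neg_one]
    congr 1
    ring

variable {t : ℂ}

lemma summable_norm_mul_pow (a : ℂ) (ht : ‖t‖ < 1) : Summable fun k => ‖a * t ^ k‖ := by
  simpa [norm_mul, norm_pow] using
    (summable_geometric_of_lt_one (norm_nonneg t) ht).mul_left ‖a‖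

lemma tendsto_qPoch (a : ℂ) (ht : ‖t‖ < 1) :
    Tendsto (qPoch a t) atTop (𝓝 (qPochInf a t)) := by
  have h := (multipliable_one_add_of_summable (f := fun k => -(a * t ^ k))
    (by simpa using summable_norm_mul_pow a ht)).hasProd.tendsto_prod_nat
  simp only [← sub_eq_add_neg] at h
  exact h

lemma one_sub_mul_pow_ne_zero (ht : ‖t‖ < 1) (k : ℕ) : 1 - t * t ^ k ≠ 0 := by
  rw [sub_ne_zero, ← pow_succ']
  intro h
  have := congrArg norm h
  rw [norm_one, norm_pow] at this
  exact (pow_lt_one₀ (norm_nonneg t) ht k.succ_ne_zero).ne' this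

lemma qPoch_self_ne_zero (ht : ‖t‖ < 1) (m : ℕ) : qPoch t t m ≠ 0 :=
  prod_ne_zero_iff.2 fun k _ => one_sub_mul_pow_ne_zero ht k

lemma qPochInf_self_ne_zero (ht : ‖t‖ < 1) : qPochInf t t ≠ 0 := by
  have h := tprod_one_add_ne_zero_of_summable (f := fun k => -(t * t ^ k))
    (fun k => by simpa only [← sub_eq_add_neg] using one_sub_mul_pow_ne_zero ht k)
    (by simpa using summable_norm_mul_pow t ht)
  simpa only [qPochInf, ← sub_eq_add_neg] using h

lemma exists_norm_qPoch_le (ht : ‖t‖ < 1) :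
    ∃ C, ∀ m, ‖qPoch t t m‖ ≤ C ∧ ‖(qPoch t t m)⁻¹‖ ≤ C := by
  have h := tendsto_qPoch t ht
  obtain ⟨C₁, hC₁⟩ := isBounded_iff_forall_norm_le.1 (Metric.isBounded_range_of_tendsto _ h)
  obtain ⟨C₂, hC₂⟩ := isBounded_iff_forall_norm_le.1
    (Metric.isBounded_range_of_tendsto _ (h.inv₀ (qPochInf_self_ne_zero ht)))
  exact ⟨max C₁ C₂, fun m => ⟨(hC₁ _ ⟨m, rfl⟩).trans (le_max_left _ _),
    (hC₂ _ ⟨m, rfl⟩).trans (le_max_right _ _)⟩⟩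

lemma gaussBinom_eq_div (ht : ‖t‖ < 1) {m k : ℕ} (hk : k ≤ m) :
    gaussBinom t m k = qPoch t t m / (qPoch t t k * qPoch t t (m - k)) := by
  rw [eq_div_iff (mul_ne_zero (qPoch_self_ne_zero ht k) (qPoch_self_ne_zero ht (m - k))),
    ← mul_assoc]
  simpa only [Nat.add_sub_cancel' hk] using gaussBinom_mul_qPoch_mul_qPoch t k (m - k)

lemma exists_norm_qPoch_mul_gaussBinom_le (ht : ‖t‖ < 1) :
    ∃ C, ∀ N k, k ≤ 2 * N → ‖qPoch t t N * gaussBinom t (2 * N) k‖ ≤ C := by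
  obtain ⟨C, hC⟩ := exists_norm_qPoch_le ht
  have hC₀ : 0 ≤ C := (norm_nonneg _).trans (hC 0).1
  refine ⟨C * (C * (C * C)), fun N k hk => ?_⟩
  rw [gaussBinom_eq_div ht hk, div_eq_mul_inv, mul_inv, norm_mul, norm_mul, norm_mul]
  gcongr
  exacts [(hC _).1, (hC _).1, (hC _).2, (hC _).2]

lemma tendsto_qPoch_mul_gaussBinom (ht : ‖t‖ < 1) (n : ℤ) :
    Tendsto (fun N => qPoch t t N * gaussBinom t (2 * N) (N + n).toNat) atTop (𝓝 1) := by
  set P := qPochInf t t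
  have hP := tendsto_qPoch t ht
  have h_index {f : ℕ → ℕ} (hf : ∀ N, N - n.natAbs ≤ f N) :
      Tendsto (qPoch t t ∘ f) atTop (𝓝 P) :=
    hP.comp (tendsto_atTop_mono hf (tendsto_sub_atTop_nat n.natAbs))
  have hP₀ : P ≠ 0 := qPochInf_self_ne_zero ht
  have h := hP.mul ((h_index (f := (2 * ·)) (by omega)).div
    ((h_index (f := fun N => (N + n).toNat) (by omega)).mul
      (h_index (f := fun N => 2 * N - (N + n).toNat) (by omega))) (mul_ne_zero hP₀ hP₀))
  rw [show P * (P / (P * P)) = 1 by field_simp] at h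
  refine h.congr' ?_
  filter_upwards [eventually_ge_atTop n.natAbs] with N hN
  rw [gaussBinom_eq_div ht (by omega)]
  rfl

theorem tendsto_qPoch_mul_sum_gaussBinom (ht : ‖t‖ < 1) {g : ℤ → ℂ} (hg : Summable (‖g ·‖)) :
    Tendsto
      (fun N => qPoch t t N * ∑ n ∈ Icc (-N : ℤ) N, gaussBinom t (2 * N) (N + n).toNat * g n)
      atTop (𝓝 (∑' n, g n)) := by
  obtain ⟨C, hC⟩ := exists_norm_qPoch_mul_gaussBinom_le ht
  have hC₀ : 0 ≤ C := (norm_nonneg _).trans (hC 0 0 le_rfl)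
  set f : ℕ → ℤ → ℂ := fun N n =>
    if n ∈ Icc (-N : ℤ) N then qPoch t t N * gaussBinom t (2 * N) (N + n).toNat * g n else 0
  have h_tsum (N : ℕ) : ∑' n, f N n
      = qPoch t t N * ∑ n ∈ Icc (-N : ℤ) N, gaussBinom t (2 * N) (N + n).toNat * g n := by
    rw [tsum_eq_sum (s := Icc (-N : ℤ) N) fun n hn => if_neg hn, mul_sum]
    exact sum_congr rfl fun n hn => by rw [if_pos hn, mul_assoc]
  have h_pointwise (n : ℤ) : Tendsto (f · n) atTop (𝓝 (g n)) := by
    have h := (tendsto_qPoch_mul_gaussBinom ht n).mul_const (g n)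
    rw [one_mul] at h
    refine h.congr' ?_
    filter_upwards [eventually_ge_atTop n.natAbs] with N hN
    have hn : n ∈ Icc (-N : ℤ) N := mem_Icc.2 ⟨by omega, by omega⟩
    simp only [f, if_pos hn]
  have h_bound (N : ℕ) (n : ℤ) : ‖f N n‖ ≤ C * ‖g n‖ := by
    by_cases hn : n ∈ Icc (-N : ℤ) N
    · simp only [f, if_pos hn]
      rw [norm_mul]
      exact mul_le_mul_of_nonneg_right (hC N _ (by rw [mem_Icc] at hn; omega)) (norm_nonneg _)
    · simp only [f, if_neg hn, norm_zero]
      positivity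
  exact (tendsto_tsum_of_dominated_convergence (hg.mul_left C) h_pointwise
    (Eventually.of_forall h_bound)).congr h_tsum

end Analysis

theorem jacobi_triple_product_general (q z : ℂ) (hq : ‖q‖ < 1) (hz : z ≠ 0) :
    qPochInf (q ^ 2) (q ^ 2) * qPochInf (q * z) (q ^ 2) * qPochInf (q / z) (q ^ 2)
      = ∑' n : ℤ, (-1 : ℂ) ^ n * z ^ n * q ^ (n ^ 2) := by
  rcases eq_or_ne q 0 with rfl | hq₀
  · rw [tsum_eq_single 0 fun n hn => by simp [zero_zpow _ (pow_ne_zero 2 hn)]]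
    simp [qPochInf]
  have ht : ‖q ^ 2‖ < 1 := by
    rw [norm_pow]
    exact pow_lt_one₀ (norm_nonneg q) hq two_ne_zero
  have h_prod := (tendsto_qPoch (q ^ 2) ht).mul
    ((tendsto_qPoch (q * z) ht).mul (tendsto_qPoch (q / z) ht))
  have h_sum := tendsto_qPoch_mul_sum_gaussBinom ht (summable_norm_thetaTerm hq z)
  simp_rw [← qPoch_mul_qPoch_eq_sum_gaussBinom hq₀ hz] at h_sum
  rw [mul_assoc]
  exact tendsto_nhds_unique h_prod h_sum

/-- Jacobi triple product identity. -/
theorem jacobi_triple_product (q z : ℂ) (hq : ‖q‖ < 1) (hz : z ≠ 0)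
    (hzpow : ∀ n : ℤ, n ≤ 0 → z ≠ q ^ n) :
    qPochInf (q ^ 2) (q ^ 2) * qPochInf (q * z) (q ^ 2) * qPochInf (q / z) (q ^ 2)
      = ∑' n : ℤ, (-1 : ℂ) ^ n * z ^ n * q ^ (n ^ 2) :=
  jacobi_triple_product_general q z hq hz
end

section
/- Define Y_j(q) = ∑_{n ≡ j mod 3} (-1)^n q^{n^2+n} / (1 + q^{2n+1}) for j = 0, 1, 2, the sum over all integers n congruent to j modulo 3. Then Y₀(q) - Y₂(q) = (q^6;q^6)_∞. -/
open Complex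

/-- `Y_j(q) = ∑_{n ≡ j (mod 3)} (-1)ⁿ q^{n²+n}/(1+q^{2n+1})`. -/
noncomputable def Ysum (q : ℂ) (j : ℤ) : ℂ :=
  ∑' n : {m : ℤ // m % 3 = j},
    (-1 : ℂ) ^ (n : ℤ) * q ^ ((n : ℤ) ^ 2 + (n : ℤ)) / (1 + q ^ (2 * (n : ℤ) + 1))

/-!
Pairing the term `n = 3m` of `Y₀` with the term `n = -3m - 1` of `Y₂` cancels the denominators,
since the summand satisfies `Yterm q (-n - 1) = -q ^ (2n + 1) * Yterm q n`; what remains is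
`∑ₘ (-1)ᵐ q^{9m²+3m}`, the pentagonal series at `x = q⁶`. Mathlib proves Euler's pentagonal number
theorem in a topological ring modulo summability and multipliability hypotheses, which for
`‖x‖ < 1` in a complete normed ring follow from geometric bounds.
-/

open Filter Topology Finset

lemma le_pentagonal_neg (k : ℕ) : k ≤ pentagonal (-k) := by
  have := two_mul_natCast_pentagonal_neg k
  zify
  nlinarith

lemma le_pentagonal_add_one (k : ℕ) : k ≤ pentagonal (k + 1) := by
  have := two_mul_natCast_pentagonal (k + 1)
  zify
  nlinarith

lemma norm_neg_one_pow_mul_le {R : Type*} [NormedRing R] (k : ℕ) (y : R) :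
    ‖(-1) ^ k * y‖ ≤ ‖y‖ := by
  rcases neg_one_pow_eq_or R k with h | h <;> simp [h]

section NormedCommRing

variable {R : Type*} [NormedCommRing R] [NormOneClass R] {x : R}

lemma norm_prod_range_one_sub_pow_le (hx : ‖x‖ < 1) (k n : ℕ) :
    ‖∏ i ∈ range n, (1 - x ^ (k + i + 1))‖ ≤ Real.exp (1 - ‖x‖)⁻¹ := by
  have hgeom : ∑ i ∈ range n, ‖-x ^ (k + i + 1)‖ ≤ (1 - ‖x‖)⁻¹ := calc
    _ ≤ ∑ i ∈ range n, ‖x‖ ^ i := by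
      gcongr with i
      rw [norm_neg]
      exact (norm_pow_le _ _).trans (pow_le_pow_of_le_one (norm_nonneg _) hx.le (by omega))
    _ ≤ (1 - ‖x‖)⁻¹ := by
      rw [← tsum_geometric_of_lt_one (norm_nonneg _) hx]
      exact (summable_geometric_of_lt_one (norm_nonneg _) hx).sum_le_tsum _
        fun i _ ↦ by positivity
  have hprod := (range n).norm_prod_one_add_sub_one_le fun i ↦ -x ^ (k + i + 1)
  simp only [← sub_eq_add_neg] at hprod
  linarith [norm_le_norm_sub_add (∏ i ∈ range n, (1 - x ^ (k + i + 1))) 1, norm_one (α := R),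
    Real.exp_le_exp.2 hgeom]

lemma norm_pow_mul_prod_one_sub_pow_le (hx : ‖x‖ < 1) (k n : ℕ) :
    ‖x ^ ((k + 1) * n) * ∏ i ∈ range (n + 1), (1 - x ^ (k + i + 1))‖ ≤
      Real.exp (1 - ‖x‖)⁻¹ * ‖x‖ ^ n := by
  rw [mul_comm (Real.exp _)]
  refine (norm_mul_le _ _).trans (mul_le_mul ?_ (norm_prod_range_one_sub_pow_le hx k _)
    (norm_nonneg _) (by positivity))
  exact (norm_pow_le _ _).trans
    (pow_le_pow_of_le_one (norm_nonneg _) hx.le (Nat.le_mul_of_pos_left n k.succ_pos))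

lemma tendsto_neg_one_pow_mul_pow_mul_tsum (hx : ‖x‖ < 1) {e : ℕ → ℕ} (he : ∀ k, k ≤ e k) :
    Tendsto (fun k ↦ (-1) ^ (k + 1) * x ^ e k *
      ∑' n, x ^ ((k + 1) * n) * ∏ i ∈ range (n + 1), (1 - x ^ (k + i + 1))) atTop (𝓝 0) := by
  set C := Real.exp (1 - ‖x‖)⁻¹ * (1 - ‖x‖)⁻¹
  refine squeeze_zero_norm (a := fun k ↦ C * ‖x‖ ^ k) (fun k ↦ ?_) ?_
  · have hsum : ‖∑' n, x ^ ((k + 1) * n) * ∏ i ∈ range (n + 1), (1 - x ^ (k + i + 1))‖ ≤ C :=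
      tsum_of_norm_bounded ((hasSum_geometric_of_lt_one (norm_nonneg _) hx).mul_left _)
        (norm_pow_mul_prod_one_sub_pow_le hx k)
    rw [mul_assoc, mul_comm C]
    refine (norm_neg_one_pow_mul_le _ _).trans <| (norm_mul_le _ _).trans <|
      mul_le_mul ?_ hsum (norm_nonneg _) (by positivity)
    exact (norm_pow_le _ _).trans (pow_le_pow_of_le_one (norm_nonneg _) hx.le (he k))
  · simpa using (tendsto_pow_atTop_nhds_zero_of_lt_one (norm_nonneg _) hx).const_mul C

variable [CompleteSpace R]

lemma summable_neg_one_pow_mul_pow (hx : ‖x‖ < 1) {e : ℕ → ℕ} (he : ∀ k, k ≤ e k) :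
    Summable fun k ↦ (-1) ^ k * x ^ e k :=
  .of_norm_bounded (summable_geometric_of_lt_one (norm_nonneg _) hx) fun k ↦
    (norm_neg_one_pow_mul_le _ _).trans <|
      (norm_pow_le _ _).trans (pow_le_pow_of_le_one (norm_nonneg _) hx.le (he k))

theorem tprod_one_sub_pow_eq_tsum_pentagonal (hx : ‖x‖ < 1) :
    ∏' n, (1 - x ^ (n + 1)) =
      ∑' k : ℕ, (-1) ^ k * (x ^ pentagonal (-k) - x ^ pentagonal (k + 1)) := by
  refine Pentagonal.tprod_one_sub_pow (tendsto_pow_atTop_nhds_zero_of_norm_lt_one hx)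
    (fun k ↦ .of_norm_bounded ((summable_geometric_of_lt_one (norm_nonneg _) hx).mul_left _)
      (norm_pow_mul_prod_one_sub_pow_le hx k)) (fun k ↦ ?_) ?_
    (tendsto_neg_one_pow_mul_pow_mul_tsum hx fun k ↦ ?_)
  · simp_rw [sub_eq_add_neg]
    refine multipliable_one_add_of_summable <| .of_nonneg_of_le (fun _ ↦ norm_nonneg _)
      (fun n ↦ ?_) (summable_geometric_of_lt_one (norm_nonneg _) hx)
    rw [norm_neg]
    exact (norm_pow_le _ _).trans (pow_le_pow_of_le_one (norm_nonneg _) hx.le (by omega))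
  · simp_rw [mul_sub]
    exact (summable_neg_one_pow_mul_pow hx le_pentagonal_neg).sub
      (summable_neg_one_pow_mul_pow hx le_pentagonal_add_one)
  · exact (Nat.le_div_iff_mul_le two_pos).2 (by nlinarith)

end NormedCommRing

section NormedField

variable {𝕜 : Type*} [NormedField 𝕜] [CompleteSpace 𝕜] {x : 𝕜}

theorem hasSum_neg_one_zpow_mul_pow_pentagonal_neg (hx : ‖x‖ < 1) :
    HasSum (fun k : ℤ ↦ (-1) ^ k * x ^ pentagonal (-k)) (∏' n, (1 - x ^ (n + 1))) := by
  have hnat := summable_neg_one_pow_mul_pow hx le_pentagonal_neg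
  have hneg := (summable_neg_one_pow_mul_pow hx le_pentagonal_add_one).neg
  have hsum : HasSum (fun k : ℤ ↦ (-1) ^ k * x ^ pentagonal (-k))
      (∑' k : ℕ, (-1) ^ k * x ^ pentagonal (-k) +
        ∑' k : ℕ, -((-1) ^ k * x ^ pentagonal (k + 1))) := by
    refine .of_nat_of_neg_add_one (hnat.hasSum.congr_fun fun n ↦ ?_)
      (hneg.hasSum.congr_fun fun n ↦ ?_)
    · simp
    · rw [neg_neg, zpow_neg, zpow_add₀ (neg_ne_zero.2 one_ne_zero)]
      simp [← inv_pow]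
  convert hsum using 1
  rw [tprod_one_sub_pow_eq_tsum_pentagonal hx, ← hnat.tsum_add hneg]
  exact tsum_congr fun k ↦ by ring

end NormedField

section Field

variable {K : Type*} [Field K]

def Yterm (q : K) (n : ℤ) : K := (-1) ^ n * q ^ (n ^ 2 + n) / (1 + q ^ (2 * n + 1))

lemma Yterm_neg_sub_one {q : K} (hq : q ≠ 0) (n : ℤ) :
    Yterm q (-n - 1) = -q ^ (2 * n + 1) * Yterm q n := by
  have hsign : (-1 : K) ^ (-n - 1) = -(-1) ^ n := by
    rw [zpow_sub₀ (neg_ne_zero.2 one_ne_zero), zpow_neg, ← inv_zpow, inv_neg, inv_one, zpow_one,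
      div_neg, div_one]
  rw [Yterm, Yterm, hsign, show (-n - 1) ^ 2 + (-n - 1) = n ^ 2 + n by ring,
    show 2 * (-n - 1) + 1 = -(2 * n + 1) by ring, zpow_neg,
    show 1 + (q ^ (2 * n + 1))⁻¹ = (1 + q ^ (2 * n + 1)) / q ^ (2 * n + 1) by field_simp; ring]
  rw [div_div_eq_mul_div]
  ring

lemma Yterm_sub_Yterm_neg_sub_one {q : K} (hq : q ≠ 0) {n : ℤ} (hpole : q ^ (2 * n + 1) ≠ -1) :
    Yterm q n - Yterm q (-n - 1) = (-1) ^ n * q ^ (n ^ 2 + n) := by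
  have hD : 1 + q ^ (2 * n + 1) ≠ 0 := fun h ↦ hpole (by linear_combination h)
  rw [Yterm_neg_sub_one hq, Yterm]
  field_simp
  ring

lemma zpow_nine_mul_sq_add_three_mul (q : K) (m : ℤ) :
    q ^ (9 * m ^ 2 + 3 * m) = (q ^ 6) ^ pentagonal (-m) := by
  rw [← pow_mul, ← zpow_natCast]
  congr 1
  push_cast
  linear_combination (-3) * two_mul_natCast_pentagonal_neg m

lemma Yterm_three_mul_sub_Yterm_neg_three_mul_sub_one {q : K} (hq : q ≠ 0) {m : ℤ}
    (hpole : q ^ (2 * (3 * m) + 1) ≠ -1) :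
    Yterm q (3 * m) - Yterm q (-(3 * m) - 1) = (-1) ^ m * (q ^ 6) ^ pentagonal (-m) := by
  rw [Yterm_sub_Yterm_neg_sub_one hq hpole, show (3 * m) ^ 2 + 3 * m = 9 * m ^ 2 + 3 * m by ring,
    zpow_nine_mul_sq_add_three_mul, zpow_mul]
  norm_num

end Field

section NormedField

variable {𝕜 : Type*} [NormedField 𝕜] {q : 𝕜}

lemma norm_Yterm_natCast_le (hq : ‖q‖ < 1) (n : ℕ) :
    ‖Yterm q n‖ ≤ (1 - ‖q‖)⁻¹ * ‖q‖ ^ n := by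
  have hden : 1 - ‖q‖ ≤ ‖1 + q ^ (2 * (n : ℤ) + 1)‖ := by
    have hw : ‖q ^ (2 * (n : ℤ) + 1)‖ ≤ ‖q‖ := by
      rw [show 2 * (n : ℤ) + 1 = (2 * n + 1 : ℕ) by push_cast; ring, zpow_natCast, norm_pow]
      exact pow_le_of_le_one (norm_nonneg _) hq.le (by omega)
    linarith [norm_le_add_norm_add (1 : 𝕜) (q ^ (2 * (n : ℤ) + 1)), norm_one (α := 𝕜)]
  rw [Yterm, div_eq_inv_mul, norm_mul, norm_inv, norm_mul, norm_zpow, norm_neg, norm_one,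
    one_zpow, one_mul, show (n : ℤ) ^ 2 + n = (n ^ 2 + n : ℕ) by push_cast; ring, zpow_natCast,
    norm_pow]
  refine mul_le_mul (inv_anti₀ (by linarith) hden) ?_ (by positivity) (by positivity)
  exact pow_le_pow_of_le_one (norm_nonneg _) hq.le (by nlinarith)

lemma summable_Yterm [CompleteSpace 𝕜] (hq0 : q ≠ 0) (hq : ‖q‖ < 1) : Summable (Yterm q) := by
  have hgeom := (summable_geometric_of_lt_one (norm_nonneg _) hq).mul_left (1 - ‖q‖)⁻¹
  refine .of_nat_of_neg_add_one (.of_norm_bounded hgeom (norm_Yterm_natCast_le hq))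
    (.of_norm_bounded hgeom fun n ↦ le_trans ?_ (norm_Yterm_natCast_le hq n))
  rw [neg_add', Yterm_neg_sub_one hq0, norm_mul, norm_neg,
    show 2 * (n : ℤ) + 1 = (2 * n + 1 : ℕ) by push_cast; ring, zpow_natCast, norm_pow]
  exact mul_le_of_le_one_left (norm_nonneg _) (pow_le_one₀ (norm_nonneg _) hq.le)

end NormedField

def threeMulEquiv : ℤ ≃ {n : ℤ // n % 3 = 0} where
  toFun m := ⟨3 * m, by omega⟩
  invFun n := n.1 / 3
  left_inv m := show 3 * m / 3 = m by omega
  right_inv n := Subtype.ext (show 3 * (n.1 / 3) = n.1 by have := n.2; omega)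

-- Parametrised as `-(3m) - 1` rather than `3m + 2` so that it pairs with `3m` under `n ↦ -n - 1`.
def negThreeMulSubOneEquiv : ℤ ≃ {n : ℤ // n % 3 = 2} where
  toFun m := ⟨-(3 * m) - 1, by omega⟩
  invFun n := (-n.1 - 1) / 3
  left_inv m := show (-(-(3 * m) - 1) - 1) / 3 = m by omega
  right_inv n := Subtype.ext (show -(3 * ((-n.1 - 1) / 3)) - 1 = n.1 by have := n.2; omega)

lemma Ysum_zero_sub_Ysum_two {q : ℂ} (hq0 : q ≠ 0) (hq : ‖q‖ < 1) :
    Ysum q 0 - Ysum q 2 = ∑' m : ℤ, (Yterm q (3 * m) - Yterm q (-(3 * m) - 1)) := by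
  have hY : Summable (Yterm q) := summable_Yterm hq0 hq
  have h0 : Summable fun m : ℤ ↦ Yterm q (3 * m) :=
    hY.comp_injective fun a b h ↦ by simpa using h
  have h2 : Summable fun m : ℤ ↦ Yterm q (-(3 * m) - 1) :=
    hY.comp_injective fun a b h ↦ by simpa using h
  rw [h0.tsum_sub h2]
  exact congr_arg₂ _ (threeMulEquiv.tsum_eq fun n ↦ Yterm q n).symm
    (negThreeMulSubOneEquiv.tsum_eq fun n ↦ Yterm q n).symm

theorem Y0_sub_Y2 (q : ℂ) (hq0 : 0 < ‖q‖) (hq : ‖q‖ < 1)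
    (hpole : ∀ n : ℤ, q ^ (2 * n + 1) ≠ -1) :
    Ysum q 0 - Ysum q 2 = qPochInf (q ^ 6) (q ^ 6) := by
  have hq0' : q ≠ 0 := norm_pos_iff.1 hq0
  have hq6 : ‖q ^ 6‖ < 1 := by simpa using pow_lt_one₀ hq0.le hq (by norm_num : 6 ≠ 0)
  calc Ysum q 0 - Ysum q 2 = ∑' m : ℤ, (Yterm q (3 * m) - Yterm q (-(3 * m) - 1)) :=
        Ysum_zero_sub_Ysum_two hq0' hq
    _ = ∑' m : ℤ, (-1) ^ m * (q ^ 6) ^ pentagonal (-m) :=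
        tsum_congr fun m ↦ Yterm_three_mul_sub_Yterm_neg_three_mul_sub_one hq0' (hpole (3 * m))
    _ = ∏' n, (1 - (q ^ 6) ^ (n + 1)) :=
        (hasSum_neg_one_zpow_mul_pow_pentagonal_neg hq6).tsum_eq
    _ = qPochInf (q ^ 6) (q ^ 6) := by simp only [qPochInf, pow_succ']
end
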